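/- arXiv:2504.20315 — 3 statements merged into one kernel-verified Lean document; each statement's English description precedes it below -/
import Mathlib

section
/- Fix real constants 0 < C₁ < C₂ < ∞ and a real exponent p > 3. Define f(p,t,y) = (t+y)^p − t^p − y^p − p t^{p−1} y for t > 0, y > 0. Then there exists A₂ > 0 (depending on p, C₁, C₂) such that f(p,t,y) ≥ (1/2) p C₁ y^{p−1} − A₂ y^2 for all (t,y) ∈ [C₁, C₂] × (0, ∞). -/
/-! For `y ≤ t` the tangent-line (Bernoulli) bound `(t + y)^p ≥ t^p + p t^(p-1) y` leaves only `-y^p`,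
and both `y^p` and `y^(p-1)` are `O(y^2)` because `y ≤ C₂` and `p > 3`. For `t ≤ y` the same bound with
the roles of `t` and `y` exchanged gives the main term `p t y^(p-1) ≥ p C₁ y^(p-1)`, while `t^p` and
`p t^(p-1) y` are `O(y^2)` because `t ≤ min C₂ y`. -/

open Real

lemma rpow_add_mul_le_add_rpow {a b p : ℝ} (ha : 0 < a) (hb : 0 ≤ b) (hp : 1 ≤ p) :
    a ^ p + p * a ^ (p - 1) * b ≤ (a + b) ^ p := by
  have hba : -1 ≤ b / a := by linarith [div_nonneg hb ha.le]
  have key := mul_le_mul_of_nonneg_left (one_add_mul_self_le_rpow_one_add hba hp)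
    (rpow_pos_of_pos ha p).le
  have hsum : a ^ p * (1 + b / a) ^ p = (a + b) ^ p := by
    rw [← mul_rpow ha.le (by positivity)]
    congr 1
    field_simp
  have hsub : a ^ (p - 1) = a ^ p / a := by rw [rpow_sub ha, rpow_one]
  rw [hsum] at key
  rw [hsub]
  calc a ^ p + p * (a ^ p / a) * b = a ^ p * (1 + p * (b / a)) := by field_simp
    _ ≤ (a + b) ^ p := key

section PowerBounds

variable {x z M q : ℝ}

lemma rpow_add_one_mul_le_mul_sq (hx : 0 < x) (hxM : x ≤ M) (hxz : x ≤ z) (hq : 0 ≤ q) :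
    x ^ (q + 1) * z ≤ M ^ q * z ^ 2 := by
  rw [rpow_add hx, rpow_one, mul_assoc, sq]
  have hz : 0 ≤ z := hx.le.trans hxz
  exact mul_le_mul (rpow_le_rpow hx.le hxM hq) (mul_le_mul_of_nonneg_right hxz hz)
    (mul_nonneg hx.le hz) ((rpow_pos_of_pos hx q).le.trans (rpow_le_rpow hx.le hxM hq))

lemma rpow_add_two_le_mul_sq (hx : 0 < x) (hxM : x ≤ M) (hxz : x ≤ z) (hq : 0 ≤ q) :
    x ^ (q + 2) ≤ M ^ q * z ^ 2 := by
  calc x ^ (q + 2) = x ^ (q + 1) * x := by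
        rw [show q + 2 = (q + 1) + 1 by ring, rpow_add hx, rpow_one]
    _ ≤ x ^ (q + 1) * z := mul_le_mul_of_nonneg_left hxz (by positivity)
    _ ≤ M ^ q * z ^ 2 := rpow_add_one_mul_le_mul_sq hx hxM hxz hq

end PowerBounds

theorem stmt_4 (C₁ C₂ p : ℝ) (h₁ : 0 < C₁) (h₁₂ : C₁ < C₂) (hp : 3 < p) :
    ∃ A₂ > 0, ∀ t y : ℝ, t ∈ Set.Icc C₁ C₂ → 0 < y →
      (t + y) ^ p - t ^ p - y ^ p - p * t ^ (p - 1) * y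
      ≥ (1 / 2) * p * C₁ * y ^ (p - 1) - A₂ * y ^ 2 := by
  have hC₂ : 0 < C₂ := h₁.trans h₁₂
  refine ⟨(1 + p) * C₂ ^ (p - 2) + 1 / 2 * p * C₁ * C₂ ^ (p - 3), by positivity, ?_⟩
  rintro t y ⟨hC₁t, htC₂⟩ hy
  have ht : 0 < t := h₁.trans_le hC₁t
  rcases le_total t y with hty | hyt
  · have htangent := rpow_add_mul_le_add_rpow hy ht.le (by linarith : 1 ≤ p)
    have htp := rpow_add_two_le_mul_sq ht htC₂ hty (by linarith : 0 ≤ p - 2)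
    have htpy := rpow_add_one_mul_le_mul_sq ht htC₂ hty (by linarith : 0 ≤ p - 2)
    rw [show p - 2 + 2 = p by ring] at htp
    rw [show p - 2 + 1 = p - 1 by ring] at htpy
    rw [add_comm y t] at htangent
    have hmain : 0 ≤ p * C₁ * y ^ (p - 1) := by positivity
    have hcorr : 0 ≤ 1 / 2 * p * C₁ * (C₂ ^ (p - 3) * y ^ 2) := by positivity
    have hlin := mul_le_mul_of_nonneg_left hC₁t (by positivity : 0 ≤ p * y ^ (p - 1))
    have hcross := mul_le_mul_of_nonneg_left htpy (by positivity : 0 ≤ p)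
    linarith
  · have htangent := rpow_add_mul_le_add_rpow ht hy.le (by linarith : 1 ≤ p)
    have hyp := rpow_add_two_le_mul_sq hy (hyt.trans htC₂) le_rfl (by linarith : 0 ≤ p - 2)
    have hyp' := rpow_add_two_le_mul_sq hy (hyt.trans htC₂) le_rfl (by linarith : 0 ≤ p - 3)
    rw [show p - 2 + 2 = p by ring] at hyp
    rw [show p - 3 + 2 = p - 1 by ring] at hyp'
    have hscaled := mul_le_mul_of_nonneg_left hyp' (by positivity : 0 ≤ 1 / 2 * p * C₁)
    have hpy : 0 ≤ p * (C₂ ^ (p - 2) * y ^ 2) := by positivity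
    linarith
end

section
/- Fix real constants 0 < C₂ < ∞ and a real exponent p > 2. Define f(p,t,y) = (t+y)^p − t^p − y^p − p t^{p−1} y for t > 0, y > 0. Then there exists a constant Â₂ > 0 (depending on p) such that |f(p,t,y)| ≤ (1/2) p^2 C₂^{p−2} y^2 + Â₂ C₂ y^{p−1} for all (t,y) ∈ (0, C₂] × (0, ∞). -/
/-!
Dividing by `t ^ p` reduces the estimate to `t = 1`, i.e. to the one-variable function
`powDefect p u = (1 + u) ^ p - 1 - u ^ p - p * u`; the homogeneities `t ^ (p - 2)` and `t` of the
two error terms are then bounded by `C₂ ^ (p - 2)` and `C₂`. For `u ≤ ε`, the second-order Taylor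
bound gives `(1 + u) ^ p - 1 - p u ≤ p (p - 1) (1 + ε) ^ (p - 2) u ^ 2 / 2`, and `ε` is chosen so
small that `(p - 1) (1 + ε) ^ (p - 2) ≤ p`; the term `u ^ p ≤ ε u ^ (p - 1)` is absorbed in the
second error term. For `u ≥ ε` every term of `powDefect p u` is `O(u ^ (p - 1))`.
-/

open Real Topology Set

noncomputable def powDefect (p u : ℝ) : ℝ := (1 + u) ^ p - 1 - u ^ p - p * u

lemma rpow_sub_rpow_le_mul_rpow_sub_one_mul {a b q : ℝ} (ha : 0 < a) (hb : 0 ≤ b) (hq : 1 ≤ q) :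
    a ^ q - b ^ q ≤ q * a ^ (q - 1) * (a - b) := by
  have hbernoulli := one_add_mul_self_le_rpow_one_add
    (by linarith [div_nonneg hb ha.le] : -1 ≤ b / a - 1) hq
  rw [add_sub_cancel, div_rpow hb ha.le, le_div_iff₀ (rpow_pos_of_pos ha q)] at hbernoulli
  have hexpand : (1 + q * (b / a - 1)) * a ^ q = a ^ q - q * a ^ (q - 1) * (a - b) := by
    rw [rpow_sub_one ha.ne']; field_simp; ring
  linarith

lemma rpow_le_rpow_sub_mul_rpow_of_le {ε u r s : ℝ} (hε : 0 < ε) (hεu : ε ≤ u) (hrs : r ≤ s) :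
    u ^ r ≤ ε ^ (r - s) * u ^ s := by
  have hu : 0 < u := hε.trans_le hεu
  calc u ^ r = u ^ (r - s) * u ^ s := by rw [← rpow_add hu, sub_add_cancel]
    _ ≤ ε ^ (r - s) * u ^ s :=
      mul_le_mul_of_nonneg_right (rpow_le_rpow_of_nonpos hε hεu (by linarith)) (by positivity)

lemma one_add_rpow_sub_one_sub_mul_le {p u : ℝ} (hp : 2 ≤ p) (hu : 0 ≤ u) :
    (1 + u) ^ p - 1 - p * u ≤ p * (p - 1) * (1 + u) ^ (p - 2) / 2 * u ^ 2 := by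
  set K := p * (p - 1) * (1 + u) ^ (p - 2)
  let φ : ℝ → ℝ := fun s => K / 2 * s ^ 2 + p * s + 1 - (1 + s) ^ p
  have hφ' : ∀ s, 0 ≤ s → HasDerivAt φ (K * s + p - p * (1 + s) ^ (p - 1)) s := by
    intro s hs
    have hpow : HasDerivAt (fun s : ℝ => (1 + s) ^ p) (p * (1 + s) ^ (p - 1)) s := by
      simpa using ((hasDerivAt_id s).const_add 1).rpow_const (p := p)
        (Or.inl (by simp only [id]; linarith))
    have hquad : HasDerivAt (fun s : ℝ => K / 2 * s ^ 2 + p * s + 1) (K * s + p) s :=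
      ((((hasDerivAt_pow 2 s).const_mul (K / 2)).add ((hasDerivAt_id s).const_mul p)).add_const
        1).congr_deriv (by push_cast; ring)
    exact hquad.sub hpow
  have hmono : MonotoneOn φ (Icc 0 u) := by
    refine monotoneOn_of_hasDerivWithinAt_nonneg (convex_Icc 0 u)
      (fun s hs => (hφ' s hs.1).continuousAt.continuousWithinAt)
      (fun s hs => (hφ' s (interior_subset hs).1).hasDerivWithinAt) ?_
    intro s hs
    rw [interior_Icc] at hs
    obtain ⟨hs0, hsu⟩ := hs
    have hgrad := rpow_sub_rpow_le_mul_rpow_sub_one_mul (by linarith : (0 : ℝ) < 1 + s)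
      zero_le_one (by linarith : 1 ≤ p - 1)
    rw [one_rpow, add_sub_cancel_left, sub_sub, one_add_one_eq_two] at hgrad
    have hpow_mono : (1 + s) ^ (p - 2) ≤ (1 + u) ^ (p - 2) := by
      gcongr
    have hcoef : 0 ≤ p * (p - 1) * s := by
      have : 0 ≤ p - 1 := by linarith
      positivity
    nlinarith [mul_le_mul_of_nonneg_left hpow_mono hcoef]
  have hφu : φ 0 ≤ φ u := hmono ⟨le_rfl, hu⟩ ⟨hu, le_rfl⟩ hu
  simp only [φ] at hφu
  norm_num at hφu
  linarith

lemma exists_pos_one_add_rpow_lt {r c : ℝ} (hc : 1 < c) : ∃ ε > 0, (1 + ε) ^ r < c := by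
  have hcont : ContinuousAt (fun s : ℝ => (1 + s) ^ r) 0 :=
    (continuous_const.add continuous_id).continuousAt.rpow_const (Or.inl (by norm_num))
  have hnear : ∀ᶠ s in 𝓝 0, (1 + s) ^ r < c := hcont.eventually (gt_mem_nhds (by simpa using hc))
  obtain ⟨ε, hεc, hε⟩ := ((hnear.filter_mono nhdsWithin_le_nhds).and
    (self_mem_nhdsWithin : ∀ᶠ s in 𝓝[>] (0 : ℝ), 0 < s)).exists
  exact ⟨ε, hε, hεc⟩

lemma abs_powDefect_le_of_le {p ε u : ℝ} (hp : 2 ≤ p) (hε : (p - 1) * (1 + ε) ^ (p - 2) ≤ p)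
    (hu : 0 < u) (huε : u ≤ ε) :
    |powDefect p u| ≤ p ^ 2 / 2 * u ^ 2 + ε * u ^ (p - 1) := by
  have hlower : 0 ≤ (1 + u) ^ p - 1 - p * u := by
    linarith [one_add_mul_self_le_rpow_one_add (by linarith : (-1 : ℝ) ≤ u) (by linarith : 1 ≤ p)]
  have hupper : (1 + u) ^ p - 1 - p * u ≤ p ^ 2 / 2 * u ^ 2 := by
    have hcoef : (p - 1) * (1 + u) ^ (p - 2) ≤ p :=
      le_trans (by gcongr; linarith) hε
    calc (1 + u) ^ p - 1 - p * u ≤ p * ((p - 1) * (1 + u) ^ (p - 2)) / 2 * u ^ 2 := by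
          simpa only [mul_assoc] using one_add_rpow_sub_one_sub_mul_le hp hu.le
      _ ≤ p ^ 2 / 2 * u ^ 2 := by
          rw [sq p]
          gcongr
  have hupow : u ^ p ≤ ε * u ^ (p - 1) := by
    have hsplit := rpow_add_one hu.ne' (p - 1)
    rw [sub_add_cancel] at hsplit
    rw [hsplit, mul_comm ε]
    exact mul_le_mul_of_nonneg_left huε (by positivity)
  have hsq : 0 ≤ p ^ 2 / 2 * u ^ 2 := by positivity
  have hupow_nonneg : 0 ≤ u ^ p := by positivity
  rw [powDefect, abs_le]
  constructor <;> linarith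

lemma abs_powDefect_le_of_ge {p ε u : ℝ} (hp : 2 ≤ p) (hε : 0 < ε) (hεu : ε ≤ u) :
    |powDefect p u| ≤ (p * (1 + ε⁻¹) ^ (p - 1) + ε ^ (1 - p) + p * ε ^ (2 - p)) * u ^ (p - 1) := by
  have hu : 0 < u := hε.trans_le hεu
  have hdiff : (1 + u) ^ p - u ^ p ≤ p * (1 + ε⁻¹) ^ (p - 1) * u ^ (p - 1) := by
    have hgrad := rpow_sub_rpow_le_mul_rpow_sub_one_mul (by linarith : 0 < 1 + u) hu.le
      (by linarith : 1 ≤ p)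
    rw [add_sub_cancel_right, mul_one] at hgrad
    have hbase : 1 + u ≤ (1 + ε⁻¹) * u := by
      have : 1 ≤ ε⁻¹ * u := by rwa [inv_mul_eq_div, one_le_div hε]
      linarith
    calc (1 + u) ^ p - u ^ p ≤ p * (1 + u) ^ (p - 1) := hgrad
      _ ≤ p * ((1 + ε⁻¹) * u) ^ (p - 1) := by gcongr; linarith
      _ = p * (1 + ε⁻¹) ^ (p - 1) * u ^ (p - 1) := by
        rw [mul_rpow (by positivity) hu.le, mul_assoc]
  have hone : 1 ≤ ε ^ (1 - p) * u ^ (p - 1) := by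
    have h := rpow_le_rpow_sub_mul_rpow_of_le hε hεu (by linarith : (0 : ℝ) ≤ p - 1)
    rwa [rpow_zero, zero_sub, neg_sub] at h
  have hlin : u ≤ ε ^ (2 - p) * u ^ (p - 1) := by
    have h := rpow_le_rpow_sub_mul_rpow_of_le hε hεu (by linarith : (1 : ℝ) ≤ p - 1)
    rwa [rpow_one, sub_sub_eq_add_sub, one_add_one_eq_two] at h
  have hlin' := mul_le_mul_of_nonneg_left hlin (by linarith : 0 ≤ p)
  have hmono : u ^ p ≤ (1 + u) ^ p := by gcongr; linarith
  have hpu : 0 ≤ p * u := mul_nonneg (by linarith) hu.le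
  rw [powDefect, abs_le]
  constructor <;> linarith

lemma exists_abs_powDefect_le {p : ℝ} (hp : 2 ≤ p) :
    ∃ A > 0, ∀ u > 0, |powDefect p u| ≤ p ^ 2 / 2 * u ^ 2 + A * u ^ (p - 1) := by
  obtain ⟨ε, hε, hεp⟩ := exists_pos_one_add_rpow_lt (r := p - 2)
    ((one_lt_div (by linarith)).2 (by linarith : p - 1 < p))
  rw [lt_div_iff₀ (by linarith), mul_comm] at hεp
  set B := p * (1 + ε⁻¹) ^ (p - 1) + ε ^ (1 - p) + p * ε ^ (2 - p)
  have hB : 0 ≤ B := by positivity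
  refine ⟨ε + B, by positivity, fun u hu => ?_⟩
  have hupow : 0 ≤ u ^ (p - 1) := by positivity
  have hsq : 0 ≤ p ^ 2 / 2 * u ^ 2 := by positivity
  rcases le_total u ε with huε | hεu
  · nlinarith [abs_powDefect_le_of_le hp hεp.le hu huε]
  · nlinarith [abs_powDefect_le_of_ge hp hε hεu]

lemma add_rpow_sub_eq_rpow_mul_powDefect {p t y : ℝ} (ht : 0 < t) (hy : 0 ≤ y) :
    (t + y) ^ p - t ^ p - y ^ p - p * t ^ (p - 1) * y = t ^ p * powDefect p (y / t) := by
  have hty : t + y = t * (1 + y / t) := by field_simp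
  rw [powDefect, hty, mul_rpow ht.le (by positivity), div_rpow hy ht.le, rpow_sub_one ht.ne']
  field_simp

theorem stmt_5_general (C₂ p : ℝ) (hp : 2 < p) :
    ∃ A₂hat > 0, ∀ t y : ℝ, 0 < t → t ≤ C₂ → 0 < y →
      |(t + y) ^ p - t ^ p - y ^ p - p * t ^ (p - 1) * y|
      ≤ (1 / 2) * p ^ 2 * C₂ ^ (p - 2) * y ^ 2 + A₂hat * C₂ * y ^ (p - 1) := by
  obtain ⟨A, hA, hbound⟩ := exists_abs_powDefect_le hp.le
  refine ⟨A, hA, fun t y ht htC hy => ?_⟩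
  rw [add_rpow_sub_eq_rpow_mul_powDefect ht hy.le, abs_mul, abs_of_pos (rpow_pos_of_pos ht p)]
  calc t ^ p * |powDefect p (y / t)|
      ≤ t ^ p * (p ^ 2 / 2 * (y / t) ^ 2 + A * (y / t) ^ (p - 1)) :=
        mul_le_mul_of_nonneg_left (hbound _ (div_pos hy ht)) (by positivity)
    _ = 1 / 2 * p ^ 2 * t ^ (p - 2) * y ^ 2 + A * t * y ^ (p - 1) := by
        rw [div_rpow hy.le ht.le, rpow_sub_one ht.ne', rpow_sub ht p 2, rpow_two]
        field_simp
    _ ≤ 1 / 2 * p ^ 2 * C₂ ^ (p - 2) * y ^ 2 + A * C₂ * y ^ (p - 1) := by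
        gcongr

theorem stmt_5 (C₂ p : ℝ) (h₂ : 0 < C₂) (hp : 2 < p) :
    ∃ A₂hat > 0, ∀ t y : ℝ, 0 < t → t ≤ C₂ → 0 < y →
      |(t + y) ^ p - t ^ p - y ^ p - p * t ^ (p - 1) * y|
      ≤ (1 / 2) * p ^ 2 * C₂ ^ (p - 2) * y ^ 2 + A₂hat * C₂ * y ^ (p - 1) :=
  stmt_5_general C₂ p hp
end

section
/- Let a, B > 0 and C ∈ ℝ be constants, let p > q > 2 be exponents, and let θ < 0. Then the function g₁(t) = B(1 − t^{p−2}) + C(1 − t^{q−2}) − θ a log(t^2) has at most two zeros in (0, ∞). -/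
theorem stmt_10 (a B θ C : ℝ) (ha : 0 < a) (hB : 0 < B) (hθ : θ < 0)
    (p q : ℝ) (hq : 2 < q) (hpq : q < p) :
    {t : ℝ | 0 < t ∧
      B * (1 - t ^ (p - 2)) + C * (1 - t ^ (q - 2)) - θ * a * Real.log (t ^ 2) = 0}.encard
      ≤ 2 := by
  set f : ℝ → ℝ := fun t => B * (1 - t ^ (p - 2)) + C * (1 - t ^ (q - 2)) - θ * a * Real.log (t ^ 2) with hf
  set S := {t : ℝ | 0 < t ∧ f t = 0} with hS
  set g : ℝ → ℝ := fun t => -(2 * θ * a) * t ^ (2 - q) - (p - 2) * B * t ^ (p - q) - (q - 2) * C with hg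
  -- derivative of f
  have hder : ∀ x : ℝ, 0 < x → HasDerivAt f (x ^ (q - 3) * g x) x := by
    intro x hx
    have h1 : HasDerivAt (fun t : ℝ => t ^ (p - 2)) ((p - 2) * x ^ (p - 2 - 1)) x :=
      Real.hasDerivAt_rpow_const (Or.inl hx.ne')
    have h2 : HasDerivAt (fun t : ℝ => t ^ (q - 2)) ((q - 2) * x ^ (q - 2 - 1)) x :=
      Real.hasDerivAt_rpow_const (Or.inl hx.ne')
    have h3 : HasDerivAt (fun t : ℝ => Real.log (t ^ 2)) ((2 * x ^ 1) / x ^ 2) x := by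
      have := (hasDerivAt_pow 2 x).log (by positivity)
      simpa using this
    have hD : HasDerivAt f
        (B * (0 - (p - 2) * x ^ (p - 2 - 1)) + C * (0 - (q - 2) * x ^ (q - 2 - 1))
          - θ * a * ((2 * x ^ 1) / x ^ 2)) x := by
      exact ((((hasDerivAt_const x (1 : ℝ)).sub h1).const_mul B).add
        (((hasDerivAt_const x (1 : ℝ)).sub h2).const_mul C)).sub ((h3).const_mul (θ * a))
    convert hD using 1
    have e1 : x ^ (q - 3) * x ^ (p - q) = x ^ (p - 2 - 1) := by
      rw [← Real.rpow_add hx]; ring_nf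
    have e2 : x ^ (q - 3) * x ^ (2 - q) = x ^ (-1 : ℝ) := by
      rw [← Real.rpow_add hx]; ring_nf
    have e3 : x ^ (q - 3) * 1 = x ^ (q - 2 - 1) := by
      rw [mul_one]; ring_nf
    have e4 : x ^ (-1 : ℝ) = 1 / x := by
      rw [Real.rpow_neg_one]; exact inv_eq_one_div x
    have hx2 : (x : ℝ) ^ 2 ≠ 0 := by positivity
    have : (2 * x ^ 1) / x ^ 2 = 2 * (1 / x) := by
      field_simp
    rw [hg]
    simp only []
    rw [this]
    rw [show x ^ (q - 3) * (-(2 * θ * a) * x ^ (2 - q) - (p - 2) * B * x ^ (p - q) - (q - 2) * C)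
        = -(2 * θ * a) * (x ^ (q - 3) * x ^ (2 - q)) - (p - 2) * B * (x ^ (q - 3) * x ^ (p - q))
          - (q - 2) * C * (x ^ (q - 3) * 1) by ring, e1, e2, e3, e4]
    ring
  -- g is injective-by-strict-antitonicity at zeros
  have hganti : ∀ s₁ s₂ : ℝ, 0 < s₁ → s₁ < s₂ → g s₁ = 0 → g s₂ = 0 → False := by
    intro s₁ s₂ hs₁ hlt hg1 hg2
    have hs₂ : 0 < s₂ := hs₁.trans hlt
    have h1 : s₂ ^ (2 - q) < s₁ ^ (2 - q) :=
      Real.rpow_lt_rpow_of_neg hs₁ hlt (by linarith)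
    have h2 : s₁ ^ (p - q) < s₂ ^ (p - q) :=
      Real.rpow_lt_rpow hs₁.le hlt (by linarith)
    have hc1 : 0 < -(2 * θ * a) := by nlinarith
    have hc2 : 0 < (p - 2) * B := by nlinarith
    simp only [hg] at hg1 hg2
    nlinarith [mul_pos hc1 (sub_pos.2 h1), mul_pos hc2 (sub_pos.2 h2)]
  -- no three zeros
  have key : ∀ t₁ t₂ t₃ : ℝ, t₁ ∈ S → t₂ ∈ S → t₃ ∈ S → t₁ < t₂ → t₂ < t₃ → False := by
    intro t₁ t₂ t₃ h₁ h₂ h₃ h12 h23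
    obtain ⟨ht₁, hf₁⟩ := h₁
    obtain ⟨ht₂, hf₂⟩ := h₂
    obtain ⟨ht₃, hf₃⟩ := h₃
    have rolle : ∀ u v : ℝ, 0 < u → u < v → f u = 0 → f v = 0 →
        ∃ c, c ∈ Set.Ioo u v ∧ g c = 0 := by
      intro u v hu huv hfu hfv
      have hcont : ContinuousOn f (Set.Icc u v) := by
        intro x hx
        exact ((hder x (lt_of_lt_of_le hu hx.1)).continuousAt).continuousWithinAt
      obtain ⟨c, hc, hc0⟩ := exists_hasDerivAt_eq_zero huv hcont (by rw [hfu, hfv])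
        (fun x hx => hder x (hu.trans hx.1))
      refine ⟨c, hc, ?_⟩
      have hcpos : 0 < c := hu.trans hc.1
      have hpow : (0 : ℝ) < c ^ (q - 3) := Real.rpow_pos_of_pos hcpos _
      rcases mul_eq_zero.1 hc0 with h | h
      · exact absurd h hpow.ne'
      · exact h
    obtain ⟨c₁, hc₁, hgc₁⟩ := rolle t₁ t₂ ht₁ h12 hf₁ hf₂
    obtain ⟨c₂, hc₂, hgc₂⟩ := rolle t₂ t₃ ht₂ h23 hf₂ hf₃
    exact hganti c₁ c₂ (ht₁.trans hc₁.1) (hc₁.2.trans hc₂.1) hgc₁ hgc₂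
  -- conclude encard bound
  by_contra hcard
  push_neg at hcard
  obtain ⟨T, hTS, hT3⟩ := Set.exists_subset_encard_eq (show (3 : ℕ∞) ≤ S.encard by
    exact_mod_cast Order.add_one_le_of_lt hcard)
  obtain ⟨x, y, z, hxy, hxz, hyz, rfl⟩ := Set.encard_eq_three.1 hT3
  have hx : x ∈ S := hTS (by simp)
  have hy : y ∈ S := hTS (by simp)
  have hz : z ∈ S := hTS (by simp)
  rcases lt_trichotomy x y with h1 | h1 | h1
  · rcases lt_trichotomy y z with h2 | h2 | h2
    · exact key x y z hx hy hz h1 h2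
    · exact hyz h2
    · rcases lt_trichotomy x z with h3 | h3 | h3
      · exact key x z y hx hz hy h3 h2
      · exact hxz h3
      · exact key z x y hz hx hy h3 h1
  · exact hxy h1
  · rcases lt_trichotomy x z with h2 | h2 | h2
    · exact key y x z hy hx hz h1 h2
    · exact hxz h2
    · rcases lt_trichotomy y z with h3 | h3 | h3
      · exact key y z x hy hz hx h3 h2
      · exact hyz h3
      · exact key z y x hz hy hx h3 h1
end
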